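/- arXiv:1701.04145 — 3 statements merged into one kernel-verified Lean document; each statement's English description precedes it below -/
import Mathlib

section
/- Let d be a positive integer and n = 2^d, and let G = Circ(a_0,…,a_{n−1}) be an n×n Hermitian circulant matrix with universal perfect state transfer. Then a_j ≠ 0 for all j = 1,…,n−1. -/
open Matrix Complex

/-- The continuous-time quantum walk `exp(-i t A)`. -/
noncomputable def qwalk {n : ℕ} [NeZero n] (A : Matrix (ZMod n) (ZMod n) ℂ) (t : ℝ) :
    Matrix (ZMod n) (ZMod n) ℂ :=
  NormedSpace.exp ((-(Complex.I * t)) • A)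

/-- Perfect state transfer from `u` to `v` at time `t`. -/
def pst {n : ℕ} [NeZero n] (A : Matrix (ZMod n) (ZMod n) ℂ) (u v : ZMod n) (t : ℝ) : Prop :=
  ‖qwalk A t v u‖ = 1

/-- Universal perfect state transfer. -/
def upst {n : ℕ} [NeZero n] (A : Matrix (ZMod n) (ZMod n) ℂ) : Prop :=
  ∀ u v : ZMod n, ∃ t : ℝ, 0 < t ∧ pst A u v t

/-- The circulant matrix `Circ(a₀,…,a_{n-1})`, with `C_{j,k} = a_{k-j}`. -/
def Circ {n : ℕ} (a : ZMod n → ℂ) : Matrix (ZMod n) (ZMod n) ℂ :=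
  fun j k => a (k - j)

section UPSTAuxSec
namespace UPSTAux


noncomputable def om (n : ℕ) : ℂ := Complex.exp (2 * Real.pi * I / n)

lemma om_prim (n : ℕ) [NeZero n] : IsPrimitiveRoot (om n) n :=
  Complex.isPrimitiveRoot_exp n (NeZero.ne n)

lemma om_pow_n (n : ℕ) [NeZero n] : om n ^ n = 1 := (om_prim n).pow_eq_one

lemma om_pow_mod (n : ℕ) [NeZero n] (a : ℕ) : om n ^ a = om n ^ (a % n) := by
  conv_lhs => rw [← Nat.div_add_mod a n]
  rw [pow_add, pow_mul, om_pow_n, one_pow, one_mul]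

noncomputable def ff {n : ℕ} [NeZero n] (x : ZMod n) : ℂ := om n ^ x.val

lemma ff_add {n : ℕ} [NeZero n] (x y : ZMod n) : ff (x + y) = ff x * ff y := by
  rw [ff, ff, ff, ← pow_add, ZMod.val_add, ← om_pow_mod]

lemma ff_zero {n : ℕ} [NeZero n] : ff (0 : ZMod n) = 1 := by
  simp [ff, ZMod.val_zero]

lemma ff_mul_pow {n : ℕ} [NeZero n] (x y : ZMod n) : ff (x * y) = ff x ^ y.val := by
  rw [ff, ff, ← pow_mul, ZMod.val_mul, ← om_pow_mod]

lemma ff_ne_one {n : ℕ} [NeZero n] {x : ZMod n} (hx : x ≠ 0) : ff x ≠ 1 :=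
  (om_prim n).pow_ne_one_of_pos_of_lt (ZMod.val_pos.mpr hx).ne' (ZMod.val_lt x)

lemma ff_neg_mul {n : ℕ} [NeZero n] (x : ZMod n) : ff (-x) * ff x = 1 := by
  rw [← ff_add, neg_add_cancel, ff_zero]

lemma abs_ff {n : ℕ} [NeZero n] (x : ZMod n) : ‖ff x‖ = 1 := by
  rw [ff, norm_pow]
  have : ‖om n‖ = 1 := by
    rw [om, Complex.norm_exp]
    norm_num [Complex.div_re, Complex.mul_I_re]
  simp [this]

lemma conj_ff {n : ℕ} [NeZero n] (x : ZMod n) :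
    (starRingEnd ℂ) (ff x) = ff (-x) := by
  have h1 : ff x * (starRingEnd ℂ) (ff x) = 1 := by
    rw [Complex.mul_conj]
    norm_cast
    rw [← Complex.sq_norm, abs_ff, one_pow]
  rw [eq_inv_of_mul_eq_one_left (ff_neg_mul x)]
  exact eq_inv_of_mul_eq_one_left (by rw [mul_comm] at h1; exact h1)

lemma sum_ff {n : ℕ} [NeZero n] (g : ZMod n) :
    ∑ k : ZMod n, ff (g * k) = if g = 0 then (n : ℂ) else 0 := by
  by_cases hg : g = 0
  · simp [hg, ff_zero]
  · simp only [hg, if_false]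
    have key : ff g * ∑ k : ZMod n, ff (g * k) = ∑ k : ZMod n, ff (g * k) := by
      rw [Finset.mul_sum]
      refine Fintype.sum_equiv (Equiv.addRight (1 : ZMod n)) _ _ fun k => ?_
      simp only [Equiv.coe_addRight, ← ff_add, mul_add, mul_one]
      ring_nf
    have h0 : (ff g - 1) * ∑ k : ZMod n, ff (g * k) = 0 := by
      rw [sub_mul, one_mul, key, sub_self]
    exact (mul_eq_zero.mp h0).resolve_left (sub_ne_zero.mpr (ff_ne_one hg))



lemma sum_range_mul' {M : Type*} [AddCommMonoid M] (f : ℕ → M) (a b : ℕ) :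
    ∑ K ∈ Finset.range (a * b), f K = ∑ i ∈ Finset.range a, ∑ r ∈ Finset.range b, f (b * i + r) := by
  induction a with
  | zero => simp
  | succ a ih =>
      rw [Nat.succ_mul, Finset.sum_range_add, ih, Finset.sum_range_succ]
      congr 1
      exact Finset.sum_congr rfl fun r _ => by ring_nf

lemma NT {d e : ℕ} (he1 : 1 ≤ e) (hed : e ≤ d) {ζ : ℂ}
    (hζ : IsPrimitiveRoot ζ (2 ^ e)) (b : ℕ → ℤ)
    (hb : ∀ K, ((b K : ZMod (2 ^ d)) = (K : ZMod (2 ^ d)))) :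
    ∑ K ∈ Finset.range (2 ^ d), (b K : ℂ) * ζ ^ K ≠ 0 := by
  intro hs
  set Q := 2 ^ (d - e) with hQ
  set E := 2 ^ e with hE
  set H := 2 ^ (e - 1) with hH
  have hQE : 2 ^ d = Q * E := by
    rw [hQ, hE, ← pow_add, Nat.sub_add_cancel hed]
  have hEH : E = H + H := by
    rw [hE, hH, ← two_mul, ← pow_succ']
    congr 1
    omega
  have hζE : ζ ^ E = 1 := hζ.pow_eq_one
  have hζH : ζ ^ H = -1 := by
    have hsq : ζ ^ H * ζ ^ H = 1 := by rw [← pow_add, ← hEH, hζE]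
    rcases mul_self_eq_one_iff.mp hsq with h | h
    · exact absurd h (hζ.pow_ne_one_of_pos_of_lt (by positivity)
        (by rw [hH, hE]; exact Nat.pow_lt_pow_right one_lt_two (by omega)))
    · exact h
  -- regroup the sum
  set cQ : ℕ → ℤ := fun r => ∑ i ∈ Finset.range Q, b (E * i + r) with hcQ
  have hs2 : ∑ r ∈ Finset.range E, (cQ r : ℂ) * ζ ^ r = 0 := by
    rw [← hs, hQE, sum_range_mul']
    rw [Finset.sum_comm]
    refine Finset.sum_congr rfl fun r _ => ?_
    rw [hcQ]
    push_cast
    rw [Finset.sum_mul]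
    refine Finset.sum_congr rfl fun i _ => ?_
    rw [pow_add, pow_mul, hζE, one_pow, one_mul]
  set CC : ℕ → ℤ := fun r => cQ r - cQ (H + r) with hCC
  have hs3 : ∑ r ∈ Finset.range H, (CC r : ℂ) * ζ ^ r = 0 := by
    rw [← hs2, hEH, Finset.sum_range_add]
    rw [← Finset.sum_add_distrib]
    refine Finset.sum_congr rfl fun r _ => ?_
    rw [hCC, pow_add, hζH]
    push_cast
    ring
  -- CC 0 ≠ 0
  have hpowdvd : ¬ ((2:ℕ) ^ d ∣ 2 ^ (d - 1)) := by
    intro h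
    have := Nat.le_of_dvd (by positivity) h
    have h2 : (2:ℕ) ^ (d - 1) < 2 ^ d := Nat.pow_lt_pow_right one_lt_two (by omega)
    omega
  have hC0 : CC 0 ≠ 0 := by
    intro h0
    have hcast : ((CC 0 : ℤ) : ZMod (2 ^ d)) = -(2 ^ (d - 1) : ℕ) := by
      rw [hCC]
      push_cast
      rw [hcQ]
      push_cast
      have : ∀ i ∈ Finset.range Q, ((b (E * i) : ZMod (2^d)) - (b (E * i + H) : ZMod (2^d)))
          = -(H : ZMod (2^d)) := by
        intro i _
        rw [hb, hb]
        push_cast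
        ring
      simp only [add_zero]
      rw [← Finset.sum_sub_distrib]
      rw [Finset.sum_congr rfl this, Finset.sum_const, Finset.card_range]
      rw [nsmul_eq_mul]
      push_cast
      rw [hQ, hH]
      push_cast
      rw [mul_neg, ← pow_add]
      congr 2
      omega
    rw [h0] at hcast
    simp only [Int.cast_zero] at hcast
    have : ((2 ^ (d - 1) : ℕ) : ZMod (2 ^ d)) = 0 := by
      rw [← neg_eq_zero, ← hcast]
    rw [ZMod.natCast_eq_zero_iff] at this
    exact hpowdvd this
  -- polynomial argument
  set P : Polynomial ℚ := ∑ r ∈ Finset.range H, Polynomial.C ((CC r : ℚ)) * Polynomial.X ^ r with hP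
  have hPcoeff : P.coeff 0 = (CC 0 : ℚ) := by
    rw [hP, Polynomial.finset_sum_coeff]
    have hterm : ∀ r ∈ Finset.range H, (Polynomial.C ((CC r : ℚ)) * Polynomial.X ^ r).coeff 0
        = if r = 0 then (CC r : ℚ) else 0 := by
      intro r _
      rw [Polynomial.coeff_C_mul, Polynomial.coeff_X_pow]
      by_cases h : r = 0
      · simp [h]
      · rw [if_neg h, if_neg (fun hh : (0:ℕ) = r => h hh.symm), mul_zero]
    rw [Finset.sum_congr rfl hterm, Finset.sum_ite_eq' (Finset.range H) 0 (fun r => (CC r : ℚ))]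
    rw [if_pos (Finset.mem_range.mpr (by positivity))]
  have hP0 : P ≠ 0 := fun h => by
    rw [h, Polynomial.coeff_zero] at hPcoeff
    exact hC0 (by exact_mod_cast hPcoeff.symm)
  have hPdeg : P.degree < (H : ℕ) := by
    refine lt_of_le_of_lt (Polynomial.degree_sum_le _ _) ?_
    rw [Finset.sup_lt_iff (by exact WithBot.bot_lt_coe _)]
    intro r hr
    exact lt_of_le_of_lt (Polynomial.degree_C_mul_X_pow_le _ _)
      (by exact_mod_cast Finset.mem_range.mp hr)
  have haev : Polynomial.aeval ζ P = 0 := by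
    rw [hP, map_sum]
    rw [← hs3]
    refine Finset.sum_congr rfl fun r _ => ?_
    simp [Polynomial.aeval_C, Polynomial.aeval_X_pow]
  have hmin := minpoly.degree_le_of_ne_zero ℚ ζ hP0 haev
  have hEpos : 0 < 2 ^ e := by positivity
  have hcyc : Polynomial.cyclotomic (2 ^ e) ℚ = minpoly ℚ ζ :=
    Polynomial.cyclotomic_eq_minpoly_rat hζ hEpos
  have hdeg : (minpoly ℚ ζ).degree = ((H : ℕ) : WithBot ℕ) := by
    rw [← hcyc, Polynomial.degree_cyclotomic]
    congr 1
    rw [Nat.totient_prime_pow Nat.prime_two he1, hH]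
    omega
  rw [hdeg] at hmin
  exact absurd (lt_of_le_of_lt hmin hPdeg) (lt_irrefl _)



lemma exp_mulVec_eigen {n : ℕ} [NeZero n] (A : Matrix (ZMod n) (ZMod n) ℂ)
    (v : ZMod n → ℂ) (μ : ℂ) (h : A.mulVec v = μ • v) :
    (NormedSpace.exp A).mulVec v = Complex.exp μ • v := by
  letI : SeminormedRing (Matrix (ZMod n) (ZMod n) ℂ) := Matrix.linftyOpSemiNormedRing
  letI : NormedRing (Matrix (ZMod n) (ZMod n) ℂ) := Matrix.linftyOpNormedRing
  letI : NormedAlgebra ℂ (Matrix (ZMod n) (ZMod n) ℂ) := Matrix.linftyOpNormedAlgebra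
  have hpow : ∀ k : ℕ, (A ^ k).mulVec v = (μ ^ k) • v := by
    intro k
    induction k with
    | zero => simp [Matrix.one_mulVec]
    | succ k ih =>
        rw [pow_succ, ← Matrix.mulVec_mulVec, h, Matrix.mulVec_smul, ih, smul_smul, pow_succ]
        ring_nf
  let Φ₀ : Matrix (ZMod n) (ZMod n) ℂ →ₗ[ℂ] (ZMod n → ℂ) :=
    { toFun := fun M => M.mulVec v
      map_add' := fun M N => Matrix.add_mulVec M N v
      map_smul' := fun c M => Matrix.smul_mulVec c M v }
  let Φ : Matrix (ZMod n) (ZMod n) ℂ →L[ℂ] (ZMod n → ℂ) :=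
    { Φ₀ with cont := Φ₀.continuous_of_finiteDimensional }
  have hsum : Summable (fun k : ℕ => ((k.factorial : ℂ))⁻¹ • A ^ k) :=
    NormedSpace.expSeries_summable' A
  have key : (NormedSpace.exp A).mulVec v
      = ∑' k : ℕ, ((k.factorial : ℂ))⁻¹ • ((μ ^ k) • v) := by
    rw [NormedSpace.exp_eq_tsum ℂ]
    have := Φ.map_tsum hsum
    calc Matrix.mulVec (∑' k : ℕ, ((k.factorial : ℂ))⁻¹ • A ^ k) v
        = Φ (∑' k : ℕ, ((k.factorial : ℂ))⁻¹ • A ^ k) := rfl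
      _ = ∑' k : ℕ, Φ (((k.factorial : ℂ))⁻¹ • A ^ k) := this
      _ = ∑' k : ℕ, ((k.factorial : ℂ))⁻¹ • ((μ ^ k) • v) := by
          refine tsum_congr fun k => ?_
          show Matrix.mulVec (((k.factorial : ℂ))⁻¹ • A ^ k) v = _
          rw [Matrix.smul_mulVec, hpow k]
  rw [key]
  have hμsum : Summable (fun k : ℕ => ((k.factorial : ℂ))⁻¹ • μ ^ k) :=
    NormedSpace.expSeries_summable' μ
  calc (∑' k : ℕ, ((k.factorial : ℂ))⁻¹ • ((μ ^ k) • v))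
      = ∑' k : ℕ, (((k.factorial : ℂ))⁻¹ • μ ^ k) • v := by
        refine tsum_congr fun k => ?_
        simp [smul_smul]
    _ = (∑' k : ℕ, ((k.factorial : ℂ))⁻¹ • μ ^ k) • v := hμsum.tsum_smul_const v
    _ = Complex.exp μ • v := by
        congr 1
        rw [Complex.exp_eq_exp_ℂ, NormedSpace.exp_eq_tsum ℂ]

lemma triangle_eq {ι : Type*} [Fintype ι] (z : ι → ℂ)
    (h1 : ∀ i, ‖z i‖ = 1)
    (h : ‖∑ i, z i‖ = (Fintype.card ι : ℝ)) :
    ∀ i, z i = (∑ j, z j) / (Fintype.card ι : ℂ) := by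
  intro i
  have hcard : 0 < Fintype.card ι := Fintype.card_pos_iff.mpr ⟨i⟩
  set S := ∑ j, z j with hS
  set N := (Fintype.card ι : ℝ) with hN
  have hNpos : (0:ℝ) < N := by rw [hN]; exact_mod_cast hcard
  have hN0 : N ≠ 0 := ne_of_gt hNpos
  have hNC : (Fintype.card ι : ℂ) = (N : ℂ) := by norm_num [hN]
  set c := S / (Fintype.card ι : ℂ) with hc
  have habsc : ‖c‖ = 1 := by
    rw [hc, norm_div, h, hNC, Complex.norm_real, Real.norm_eq_abs, _root_.abs_of_pos hNpos, div_self hN0]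
  have hre_le : ∀ j, ((starRingEnd ℂ) c * z j).re ≤ 1 := by
    intro j
    refine le_trans (Complex.re_le_norm _) ?_
    rw [norm_mul, Complex.norm_conj, habsc, h1 j, one_mul]
  have hsum_re : ∑ j, ((starRingEnd ℂ) c * z j).re = N := by
    rw [← Complex.re_sum, ← Finset.mul_sum, ← hS]
    have hmain : (starRingEnd ℂ) c * S = (N : ℂ) := by
      rw [hc, hNC, map_div₀, Complex.conj_ofReal, div_mul_eq_mul_div, mul_comm,
        Complex.mul_conj, Complex.normSq_eq_norm_sq, h]
      push_cast
      rw [pow_two, mul_div_assoc, div_self (by exact_mod_cast hN0 : (N:ℂ) ≠ 0), mul_one]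
    rw [hmain, Complex.ofReal_re]
  have hall : ∀ j, ((starRingEnd ℂ) c * z j).re = 1 := by
    by_contra hcon
    push_neg at hcon
    obtain ⟨j0, hj0⟩ := hcon
    have hlt : ((starRingEnd ℂ) c * z j0).re < 1 := lt_of_le_of_ne (hre_le j0) hj0
    have hstrict : ∑ j, ((starRingEnd ℂ) c * z j).re < ∑ _j : ι, (1:ℝ) :=
      Finset.sum_lt_sum (fun j _ => hre_le j) ⟨j0, Finset.mem_univ j0, hlt⟩
    rw [hsum_re, Finset.sum_const, Finset.card_univ, nsmul_eq_mul, mul_one] at hstrict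
    rw [hN] at hstrict
    exact lt_irrefl _ hstrict
  have habsw : ‖(starRingEnd ℂ) c * z i‖ = 1 := by
    rw [norm_mul, Complex.norm_conj, habsc, h1 i, one_mul]
  have him : ((starRingEnd ℂ) c * z i).im = 0 := by
    have h2 := Complex.sq_norm ((starRingEnd ℂ) c * z i)
    rw [habsw, Complex.normSq_apply] at h2
    nlinarith [hall i]
  have hw : (starRingEnd ℂ) c * z i = 1 := by
    apply Complex.ext
    · rw [hall i]; norm_num
    · rw [him]; norm_num
  have hcc : c * (starRingEnd ℂ) c = 1 := by
    rw [Complex.mul_conj, Complex.normSq_eq_norm_sq, habsc]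
    norm_num
  calc z i = (c * (starRingEnd ℂ) c) * z i := by rw [hcc, one_mul]
    _ = c * ((starRingEnd ℂ) c * z i) := by ring
    _ = c := by rw [hw, mul_one]


open Finset

variable {n : ℕ} [NeZero n]

/-- eigenvalues of the circulant -/
noncomputable def lam (a : ZMod n → ℂ) (k : ZMod n) : ℂ := ∑ m : ZMod n, a m * ff (m * k)

/-- Fourier eigenvectors -/
noncomputable def wv (k : ZMod n) : ZMod n → ℂ := fun j => ff (j * k)

lemma circ_mulVec (a : ZMod n → ℂ) (k : ZMod n) :
    (Circ a).mulVec (wv k) = lam a k • wv k := by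
  funext j
  show ∑ l : ZMod n, Circ a j l * wv k l = _
  have hterm : ∀ l : ZMod n, Circ a j l * wv k l
      = (a (l - j) * ff ((l - j) * k)) * ff (j * k) := by
    intro l
    rw [Circ, wv, mul_assoc, ← ff_add, ← add_mul, sub_add_cancel]
  rw [Finset.sum_congr rfl (fun l _ => hterm l), ← Finset.sum_mul]
  have hre : ∑ l : ZMod n, a (l - j) * ff ((l - j) * k) = lam a k := by
    rw [lam]
    exact Fintype.sum_equiv (Equiv.subRight j) _ _ fun l => rfl
  rw [hre]
  rfl

lemma qwalk_entry (a : ZMod n → ℂ) (t : ℝ) (v u : ZMod n) :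
    qwalk (Circ a) t v u
      = (n:ℂ)⁻¹ * ∑ k : ZMod n, Complex.exp (-(Complex.I * t) * lam a k) * ff ((v - u) * k) := by
  have heig : ∀ k, ((-(Complex.I * t)) • Circ a).mulVec (wv k)
      = ((-(Complex.I * t)) * lam a k) • wv k := by
    intro k
    rw [Matrix.smul_mulVec, circ_mulVec, smul_smul]
  have hexp : ∀ k, (qwalk (Circ a) t).mulVec (wv k)
      = Complex.exp (-(Complex.I * t) * lam a k) • wv k := fun k =>
    exp_mulVec_eigen _ _ _ (heig k)
  have hsingle : (Pi.single u 1 : ZMod n → ℂ) = (n:ℂ)⁻¹ • ∑ k : ZMod n, ff (-(u * k)) • wv k := by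
    funext i
    have : (((n:ℂ)⁻¹ • ∑ k : ZMod n, ff (-(u * k)) • wv k) i)
        = (n:ℂ)⁻¹ * ∑ k : ZMod n, ff ((i - u) * k) := by
      rw [Pi.smul_apply, Finset.sum_apply, smul_eq_mul]
      congr 1
      refine Finset.sum_congr rfl fun k _ => ?_
      rw [Pi.smul_apply, smul_eq_mul, wv, ← ff_add, ← neg_mul, ← add_mul, sub_eq_add_neg,
        add_comm (-u) i]
    rw [this, sum_ff (i - u)]
    by_cases hiu : i = u
    · subst hiu
      rw [if_pos (sub_self i), inv_mul_cancel₀ (by exact_mod_cast (NeZero.ne n))]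
      simp
    · rw [if_neg (fun hc => hiu (sub_eq_zero.mp hc)), mul_zero]
      simp [Pi.single_apply, hiu]
  have hent : qwalk (Circ a) t v u = ((qwalk (Circ a) t).mulVec (Pi.single u 1)) v := by
    rw [Matrix.mulVec_single]
    simp
  rw [hent, hsingle, Matrix.mulVec_smul]
  have hlin : (qwalk (Circ a) t).mulVec (∑ k : ZMod n, ff (-(u * k)) • wv k)
      = ∑ k : ZMod n, ff (-(u * k)) • ((qwalk (Circ a) t).mulVec (wv k)) := by
    rw [← Matrix.mulVecLin_apply, map_sum]
    refine Finset.sum_congr rfl fun k _ => ?_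
    rw [_root_.map_smul, Matrix.mulVecLin_apply]
  rw [hlin]
  rw [Pi.smul_apply, Finset.sum_apply, smul_eq_mul]
  congr 1
  refine Finset.sum_congr rfl fun k _ => ?_
  rw [Pi.smul_apply, hexp k, Pi.smul_apply, smul_eq_mul, smul_eq_mul, wv]
  rw [mul_left_comm]
  congr 1
  rw [← ff_add]
  congr 1
  ring

lemma conj_a {a : ZMod n → ℂ} (h : (Circ a).IsHermitian) (m : ZMod n) :
    (starRingEnd ℂ) (a m) = a (-m) := by
  have := h.apply 0 (-m)
  simpa [Circ] using this

lemma lam_real {a : ZMod n → ℂ} (h : (Circ a).IsHermitian) (k : ZMod n) :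
    ((lam a k).re : ℂ) = lam a k := by
  rw [← Complex.conj_eq_iff_re]
  rw [lam, map_sum]
  refine Fintype.sum_equiv (Equiv.neg (ZMod n)) _ _ fun m => ?_
  rw [_root_.map_mul, conj_a h, conj_ff]
  simp [neg_mul]

end UPSTAux
end UPSTAuxSec

open UPSTAux Finset

/-- If `n = 2^d` for a positive integer `d` and the Hermitian circulant
`Circ(a₀,…,a_{n-1})` has universal perfect state transfer, then `a_j ≠ 0` for all
`j ≠ 0`. -/
theorem stmt_15 {d n : ℕ} [NeZero n] (hd : 1 ≤ d) (hn : n = 2 ^ d)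
    (a : ZMod n → ℂ)
    (hHerm : (Circ a).IsHermitian) (hU : upst (Circ a)) :
    ∀ j : ZMod n, j ≠ 0 → a j ≠ 0 := by
  subst hn
  intro j hj h0
  have hN0 : (2 ^ d : ℕ) ≠ 0 := NeZero.ne _
  have hNr : ((2 ^ d : ℕ) : ℝ) ≠ 0 := by exact_mod_cast hN0
  set L : ZMod (2 ^ d) → ℝ := fun k => (lam a k).re with hLdef
  have hL : ∀ k : ZMod (2 ^ d), ((L k : ℝ) : ℂ) = lam a k := fun k => lam_real hHerm k
  obtain ⟨t, ht, hp⟩ := hU 0 1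
  have ht0 : (t : ℝ) ≠ 0 := ne_of_gt ht
  rw [pst, qwalk_entry] at hp
  have hone : ∀ k : ZMod (2 ^ d), ((1 : ZMod (2 ^ d)) - 0) * k = k := fun k => by ring
  set z : ZMod (2 ^ d) → ℂ :=
    fun k => Complex.exp (-(Complex.I * t) * lam a k) * ff (((1 : ZMod (2^d)) - 0) * k) with hz
  have hz1 : ∀ k, ‖z k‖ = 1 := by
    intro k
    rw [hz]
    simp only
    rw [norm_mul, Complex.norm_exp, abs_ff, mul_one]
    have hre0 : (-(Complex.I * t) * lam a k).re = 0 := by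
      rw [← hL k]
      simp [Complex.mul_re]
    rw [hre0, Real.exp_zero]
  have habs : ‖∑ k, z k‖ = ((2 ^ d : ℕ) : ℝ) := by
    rw [norm_mul, norm_inv, Complex.norm_natCast] at hp
    exact ((inv_mul_eq_one₀ hNr).mp hp).symm
  have habs' : ‖∑ k, z k‖ = (Fintype.card (ZMod (2 ^ d)) : ℝ) := by
    rw [habs, ZMod.card]
  have hzz := triangle_eq z hz1 habs'
  have hzk : ∀ k, z k = z 0 := fun k => (hzz k).trans (hzz 0).symm
  -- extract integer relations
  set cR : ℝ := 2 * Real.pi / (t * (2 ^ d : ℕ)) with hcR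
  have hbk : ∀ k : ZMod (2 ^ d), ∃ b : ℤ,
      ((b : ZMod (2 ^ d)) = k) ∧ (lam a k - lam a 0 = (cR : ℂ) * (b : ℂ)) := by
    intro k
    have hzk' := hzk k
    rw [hz] at hzk'
    simp only [hone, mul_zero, ff_zero, mul_one] at hzk'
    -- ff k = cexp (k.val * (2πI/N))
    have hffk : ff k = Complex.exp ((k.val : ℂ) * (2 * Real.pi * Complex.I / (2 ^ d : ℕ))) := by
      rw [ff, om, Complex.exp_nat_mul]
    rw [hffk] at hzk'
    have hek : Complex.exp (-(Complex.I * t) * lam a k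
        + (k.val : ℂ) * (2 * Real.pi * Complex.I / (2 ^ d : ℕ))
        - (-(Complex.I * t) * lam a 0)) = 1 := by
      rw [Complex.exp_sub, Complex.exp_add, ← Complex.exp_add, Complex.exp_add, hzk']
      exact div_self (Complex.exp_ne_zero _)
    set rk : ℝ := -(t * L k) + (k.val : ℝ) * (2 * Real.pi / (2 ^ d : ℕ)) + t * L 0 with hrk
    have harg : -(Complex.I * t) * lam a k
        + (k.val : ℂ) * (2 * Real.pi * Complex.I / (2 ^ d : ℕ))
        - (-(Complex.I * t) * lam a 0) = (rk : ℂ) * Complex.I := by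
      rw [← hL k, ← hL 0, hrk]
      push_cast
      ring
    rw [harg] at hek
    obtain ⟨zz, hzz'⟩ := Complex.exp_eq_one_iff.mp hek
    have hIcancel : (rk : ℂ) = ((zz : ℝ) * (2 * Real.pi) : ℝ) := by
      have h2 : (rk : ℂ) * Complex.I = (((zz : ℝ) * (2 * Real.pi) : ℝ) : ℂ) * Complex.I := by
        rw [hzz']
        push_cast
        ring
      exact mul_right_cancel₀ Complex.I_ne_zero h2
    have hr : rk = (zz : ℝ) * (2 * Real.pi) := by exact_mod_cast hIcancel
    refine ⟨(k.val : ℤ) - ((2 ^ d : ℕ) : ℤ) * zz, ?_, ?_⟩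
    · rw [Int.cast_sub, Int.cast_mul, Int.cast_natCast, Int.cast_natCast, ZMod.natCast_self,
        zero_mul, sub_zero]
      exact ZMod.natCast_rightInverse k
    · rw [← hL k, ← hL 0]
      have hreal : L k - L 0 = cR * ((k.val : ℝ) - ((2 ^ d : ℕ) : ℝ) * (zz : ℝ)) := by
        rw [hrk] at hr
        have h1 : t * (L k - L 0) = (k.val : ℝ) * (2 * Real.pi / (2 ^ d : ℕ))
            - (zz : ℝ) * (2 * Real.pi) := by linarith
        rw [hcR]
        field_simp at h1 ⊢
        linarith
      push_cast
      rw [← Complex.ofReal_sub, hreal]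
      push_cast
      ring
  choose B hB1 hB2 using hbk
  -- the vanishing sum
  have hjneg : (-j) ≠ 0 := neg_ne_zero.mpr hj
  have hsumff : ∑ k : ZMod (2 ^ d), ff ((-j) * k) = 0 := by
    have := sum_ff (-j)
    rwa [if_neg hjneg] at this
  have hsum1 : ∑ k : ZMod (2 ^ d), lam a k * ff ((-j) * k) = ((2 ^ d : ℕ) : ℂ) * a j := by
    calc ∑ k : ZMod (2 ^ d), lam a k * ff ((-j) * k)
        = ∑ k : ZMod (2 ^ d), ∑ m : ZMod (2 ^ d), a m * ff ((m - j) * k) := by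
          refine Finset.sum_congr rfl fun k _ => ?_
          rw [lam, Finset.sum_mul]
          refine Finset.sum_congr rfl fun m _ => ?_
          rw [mul_assoc, ← ff_add]
          congr 2
          ring
      _ = ∑ m : ZMod (2 ^ d), a m * ∑ k : ZMod (2 ^ d), ff ((m - j) * k) := by
          rw [Finset.sum_comm]
          exact Finset.sum_congr rfl fun m _ => by rw [Finset.mul_sum]
      _ = ∑ m : ZMod (2 ^ d), a m * (if m - j = 0 then ((2 ^ d : ℕ) : ℂ) else 0) := by
          refine Finset.sum_congr rfl fun m _ => by rw [sum_ff]
      _ = ((2 ^ d : ℕ) : ℂ) * a j := by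
          rw [Finset.sum_eq_single j]
          · rw [if_pos (sub_self j)]; ring
          · intro m _ hm
            rw [if_neg (fun hc => hm (sub_eq_zero.mp hc)), mul_zero]
          · intro hc
            exact absurd (Finset.mem_univ j) hc
  have hsum2 : ∑ k : ZMod (2 ^ d), (lam a k - lam a 0) * ff ((-j) * k) = 0 := by
    have hsplit : ∑ k : ZMod (2 ^ d), (lam a k - lam a 0) * ff ((-j) * k)
        = (∑ k : ZMod (2 ^ d), lam a k * ff ((-j) * k))
          - lam a 0 * ∑ k : ZMod (2 ^ d), ff ((-j) * k) := by
      rw [Finset.mul_sum, ← Finset.sum_sub_distrib]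
      exact Finset.sum_congr rfl fun k _ => by ring
    rw [hsplit, hsum1, hsumff, h0, mul_zero, mul_zero, sub_zero]
  have hcR0 : (cR : ℂ) ≠ 0 := by
    rw [Complex.ofReal_ne_zero, hcR]
    have hNpos : (0:ℝ) < ((2 ^ d : ℕ) : ℝ) := by positivity
    positivity
  have hsum3 : ∑ k : ZMod (2 ^ d), ((B k : ℤ) : ℂ) * ff ((-j) * k) = 0 := by
    have : (cR : ℂ) * ∑ k : ZMod (2 ^ d), ((B k : ℤ) : ℂ) * ff ((-j) * k) = 0 := by
      rw [Finset.mul_sum, ← hsum2]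
      refine Finset.sum_congr rfl fun k _ => ?_
      rw [hB2 k]
      ring
    exact (mul_eq_zero.mp this).resolve_left hcR0
  -- rewrite as sum over range in powers of ζ
  set ζ : ℂ := ff (-j) with hζdef
  have hsum5 : ∑ K ∈ Finset.range (2 ^ d), ((B ((K : ℕ) : ZMod (2 ^ d)) : ℤ) : ℂ) * ζ ^ K = 0 := by
    rw [← hsum3]
    refine Finset.sum_nbij' (fun K : ℕ => ((K : ℕ) : ZMod (2 ^ d))) (fun k : ZMod (2 ^ d) => k.val)
      (fun K _ => Finset.mem_univ _) (fun k _ => Finset.mem_range.mpr (ZMod.val_lt k))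
      (fun K hK => ZMod.val_cast_of_lt (Finset.mem_range.mp hK))
      (fun k _ => ZMod.natCast_rightInverse k) ?_
    intro K hK
    rw [ff_mul_pow, ZMod.val_cast_of_lt (Finset.mem_range.mp hK)]
  -- ζ is a primitive 2^e-th root of unity with 1 ≤ e ≤ d
  set mm : ℕ := (-j).val with hmm
  have hm0 : 0 < mm := ZMod.val_pos.mpr hjneg
  have hmn : mm < 2 ^ d := ZMod.val_lt (-j)
  set g : ℕ := Nat.gcd mm (2 ^ d) with hg
  have hg0 : 0 < g := Nat.gcd_pos_of_pos_left _ hm0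
  have hdvd : g ∣ 2 ^ d := Nat.gcd_dvd_right mm (2 ^ d)
  have hgm : g ∣ mm := Nat.gcd_dvd_left mm (2 ^ d)
  set n' : ℕ := (2 ^ d) / g with hn'
  have hnn' : 2 ^ d = g * n' := (Nat.mul_div_cancel' hdvd).symm
  set m' : ℕ := mm / g with hm'
  have hmm' : mm = g * m' := (Nat.mul_div_cancel' hgm).symm
  have hprim1 : IsPrimitiveRoot (om (2 ^ d) ^ g) n' :=
    (om_prim (2 ^ d)).pow (NeZero.pos _) hnn'
  have hcop : Nat.Coprime m' n' := Nat.coprime_div_gcd_div_gcd hg0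
  have hprim2 : IsPrimitiveRoot ((om (2 ^ d) ^ g) ^ m') n' := hprim1.pow_of_coprime m' hcop
  have hζeq : ζ = (om (2 ^ d) ^ g) ^ m' := by
    rw [hζdef, ff, ← pow_mul, ← hmm, ← hmm']
  have hn'dvd : n' ∣ 2 ^ d := ⟨g, by rw [hnn', mul_comm]⟩
  obtain ⟨e, hed, hn'e⟩ := (Nat.dvd_prime_pow Nat.prime_two).mp hn'dvd
  have he1 : 1 ≤ e := by
    by_contra hcon
    have he0 : e = 0 := by omega
    rw [he0, pow_zero] at hn'e
    rw [hn'e, mul_one] at hnn'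
    have : 2 ^ d ∣ mm := hnn' ▸ hgm
    have := Nat.le_of_dvd hm0 this
    omega
  have hζprim : IsPrimitiveRoot ζ (2 ^ e) := by
    rw [hζeq, ← hn'e]
    exact hprim2
  exact NT he1 hed hζprim (fun K => B ((K : ℕ) : ZMod (2 ^ d))) (fun K => hB1 _) hsum5
end

section
/- Let d ≥ 1 be an integer, n = 2^d and m = 2^{d−1}. Let c_0,…,c_{n−1} be integers and set λ_k = k + c_k·n for k ∈ ℤ/nℤ. Then for every j ∈ {1,…,n−1}, the quantity Λ_0(j) = ∑_{k ∈ ℤ/nℤ : jk ≡ 0 (mod n)} λ_k − ∑_{k ∈ ℤ/nℤ : jk ≡ m (mod n)} λ_k satisfies Λ_0(j) ≡ m (mod n); in particular Λ_0(j) ≠ 0. -/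
open Finset

lemma key16 (d : ℕ) (hd : 1 ≤ d) (j : ZMod (2 ^ d)) (hj : j ≠ 0) :
    ((∑ k ∈ Finset.univ.filter (fun k : ZMod (2 ^ d) => j * k = 0), k)
        - ∑ k ∈ Finset.univ.filter
            (fun k : ZMod (2 ^ d) => j * k = (2 : ZMod (2 ^ d)) ^ (d - 1)), k)
      = (2 : ZMod (2 ^ d)) ^ (d - 1) := by
  have hn0 : (2 : ℕ) ^ d ≠ 0 := by positivity
  haveI : NeZero (2 ^ d) := ⟨hn0⟩
  have h2d : (2 : ZMod (2 ^ d)) ^ d = 0 := by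
    have := ZMod.natCast_self (2 ^ d)
    push_cast at this; exact this
  have hjv : j.val ≠ 0 := fun h => hj ((ZMod.val_eq_zero j).mp h)
  obtain ⟨a, u, hu2, hju⟩ := Nat.exists_eq_pow_mul_and_not_dvd hjv 2 (by norm_num)
  have huodd : Odd u := Nat.odd_iff.mpr (Nat.two_dvd_ne_zero.mp hu2)
  have hu0 : u ≠ 0 := by rintro rfl; simp at hju; exact hj hju
  have had : a < d := by
    have h1 : 2 ^ a ≤ j.val := by
      rw [hju]; exact Nat.le_mul_of_pos_right _ (Nat.pos_of_ne_zero hu0)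
    have h2 : j.val < 2 ^ d := ZMod.val_lt j
    exact (Nat.pow_lt_pow_iff_right (by norm_num)).mp (lt_of_le_of_lt h1 h2)
  have hco : Nat.Coprime u (2 ^ d) :=
    ((Nat.coprime_two_left.mpr huodd).pow_left d).symm
  set U : (ZMod (2 ^ d))ˣ := ZMod.unitOfCoprime u hco with hU
  have hUu : (U : ZMod (2 ^ d)) = (u : ZMod (2 ^ d)) := ZMod.coe_unitOfCoprime u hco
  have hjval : ((j.val : ℕ) : ZMod (2 ^ d)) = j := by simp [ZMod.natCast_val]
  have hjfact : j = (2 : ZMod (2 ^ d)) ^ a * (u : ZMod (2 ^ d)) := by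
    rw [← hjval, hju]; push_cast; ring
  have h2pow : (2 : ZMod (2 ^ d)) * 2 ^ (d - 1) = 0 := by
    rw [← pow_succ', show d - 1 + 1 = d by omega]; exact h2d
  have hux : (u : ZMod (2 ^ d)) * 2 ^ (d - 1) = 2 ^ (d - 1) := by
    obtain ⟨t, ht⟩ := huodd
    rw [ht]; push_cast
    linear_combination (t : ZMod (2 ^ d)) * h2pow
  set k0 : ZMod (2 ^ d) := ((U⁻¹ : (ZMod (2 ^ d))ˣ) : ZMod (2 ^ d)) * 2 ^ (d - 1 - a)
    with hk0def
  have hUUi : (u : ZMod (2 ^ d)) * ((U⁻¹ : (ZMod (2 ^ d))ˣ) : ZMod (2 ^ d)) = 1 := by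
    rw [← hUu]; exact_mod_cast U.mul_inv
  have hpowsplit : (2 : ZMod (2 ^ d)) ^ a * 2 ^ (d - 1 - a) = 2 ^ (d - 1) := by
    rw [← pow_add, show a + (d - 1 - a) = d - 1 by omega]
  have hk0 : j * k0 = 2 ^ (d - 1) := by
    rw [hjfact, hk0def,
      show (2 : ZMod (2 ^ d)) ^ a * ↑u * (↑U⁻¹ * 2 ^ (d - 1 - a))
        = (↑u * ↑U⁻¹) * ((2 : ZMod (2 ^ d)) ^ a * 2 ^ (d - 1 - a)) by ring,
      hUUi, hpowsplit, one_mul]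
  have hUix : ((U⁻¹ : (ZMod (2 ^ d))ˣ) : ZMod (2 ^ d)) * 2 ^ (d - 1) = 2 ^ (d - 1) := by
    conv_lhs => rw [← hux, ← mul_assoc,
      show ((U⁻¹ : (ZMod (2 ^ d))ˣ) : ZMod (2 ^ d)) * ↑u = ↑u * ↑U⁻¹ by ring, hUUi, one_mul]
  set A := Finset.univ.filter (fun k : ZMod (2 ^ d) => j * k = 0) with hA
  set B := Finset.univ.filter
      (fun k : ZMod (2 ^ d) => j * k = (2 : ZMod (2 ^ d)) ^ (d - 1)) with hBdef
  have hB : B = A.map (addRightEmbedding k0) := by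
    ext x
    simp only [hBdef, hA, Finset.mem_map, Finset.mem_filter, Finset.mem_univ, true_and,
      addRightEmbedding_apply]
    constructor
    · intro hx
      exact ⟨x - k0, by rw [mul_sub, hx, hk0, sub_self], by ring⟩
    · rintro ⟨y, hy, rfl⟩
      rw [mul_add, hy, hk0, zero_add]
  -- cardinality of A
  have hf : ∀ t : Fin (2 ^ a), ((2 ^ (d - a) * (t : ℕ) : ℕ) : ZMod (2 ^ d)) ∈ A := by
    intro t
    simp only [hA, Finset.mem_filter, Finset.mem_univ, true_and]
    push_cast
    rw [hjfact]
    have : (2 : ZMod (2 ^ d)) ^ a * 2 ^ (d - a) = 0 := by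
      rw [← pow_add, show a + (d - a) = d by omega]; exact h2d
    calc (2:ZMod (2^d)) ^ a * ↑u * (2 ^ (d - a) * ↑(t:ℕ))
        = ((2:ZMod (2^d)) ^ a * 2 ^ (d-a)) * (↑u * ↑(t:ℕ)) := by ring
      _ = 0 := by rw [this, zero_mul]
  have hcardA : A.card = 2 ^ a := by
    have hval : ∀ t : Fin (2 ^ a),
        (((2 ^ (d - a) * (t : ℕ) : ℕ) : ZMod (2 ^ d))).val = 2 ^ (d - a) * (t : ℕ) := by
      intro t
      apply ZMod.val_cast_of_lt
      calc 2 ^ (d - a) * (t : ℕ) < 2 ^ (d - a) * 2 ^ a :=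
            mul_lt_mul_of_pos_left t.isLt (by positivity)
        _ = 2 ^ d := by rw [← pow_add, show d - a + a = d by omega]
    have hinj : Function.Injective
        (fun t : Fin (2 ^ a) => ((2 ^ (d - a) * (t : ℕ) : ℕ) : ZMod (2 ^ d))) := by
      intro t1 t2 h
      have := congrArg ZMod.val h
      rw [hval t1, hval t2] at this
      have := Nat.eq_of_mul_eq_mul_left (by positivity : 0 < 2 ^ (d - a)) this
      exact Fin.ext this
    have himg : A = Finset.image
        (fun t : Fin (2 ^ a) => ((2 ^ (d - a) * (t : ℕ) : ℕ) : ZMod (2 ^ d)))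
        Finset.univ := by
      apply Finset.Subset.antisymm
      · intro k hk
        simp only [hA, Finset.mem_filter, Finset.mem_univ, true_and] at hk
        have h2ak : (2 : ZMod (2 ^ d)) ^ a * k = 0 := by
          have := congrArg (fun z => ((U⁻¹ : (ZMod (2 ^ d))ˣ) : ZMod (2 ^ d)) * z) hk
          simp only [mul_zero] at this
          rw [hjfact] at this
          calc (2:ZMod (2^d)) ^ a * k
              = ↑U⁻¹ * ((2:ZMod (2^d)) ^ a * ↑u * k) := by
                rw [show (↑U⁻¹ : ZMod (2^d)) * ((2:ZMod (2^d)) ^ a * ↑u * k)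
                  = (↑u * ↑U⁻¹) * ((2:ZMod (2^d)) ^ a * k) by ring, hUUi, one_mul]
            _ = 0 := this
        have hdvd : 2 ^ d ∣ 2 ^ a * k.val := by
          rw [← ZMod.natCast_eq_zero_iff]
          push_cast
          rw [show ((k.val : ℕ) : ZMod (2^d)) = k by simp [ZMod.natCast_val]]
          exact h2ak
        obtain ⟨s, hs⟩ : 2 ^ (d - a) ∣ k.val := by
          have hdvd2 : 2 ^ a * 2 ^ (d - a) ∣ 2 ^ a * k.val := by
            rw [← pow_add, show a + (d - a) = d by omega]; exact hdvd
          exact (mul_dvd_mul_iff_left (by positivity : (2:ℕ) ^ a ≠ 0)).mp hdvd2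
        have hslt : s < 2 ^ a := by
          by_contra hle
          push_neg at hle
          have : 2 ^ d ≤ k.val := by
            calc 2 ^ d = 2 ^ (d - a) * 2 ^ a := by
                  rw [← pow_add, show d - a + a = d by omega]
              _ ≤ 2 ^ (d - a) * s := Nat.mul_le_mul_left _ hle
              _ = k.val := hs.symm
          exact absurd (ZMod.val_lt k) (not_lt.mpr this)
        rw [Finset.mem_image]
        refine ⟨⟨s, hslt⟩, Finset.mem_univ _, ?_⟩
        show ((2 ^ (d - a) * s : ℕ) : ZMod (2 ^ d)) = k
        rw [← hs, show ((k.val : ℕ) : ZMod (2^d)) = k by simp [ZMod.natCast_val]]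
      · intro x hx
        rw [Finset.mem_image] at hx
        obtain ⟨t, _, rfl⟩ := hx
        exact hf t
    rw [himg, Finset.card_image_of_injective _ hinj, Finset.card_univ, Fintype.card_fin]
  -- put it together
  have hsum : ∑ k ∈ B, k = (∑ k ∈ A, k) + A.card • k0 := by
    rw [hB, Finset.sum_map]
    simp only [addRightEmbedding_apply]
    rw [Finset.sum_add_distrib, Finset.sum_const]
  rw [hsum, hcardA]
  have hsmul : (2 ^ a : ℕ) • k0 = 2 ^ (d - 1) := by
    rw [nsmul_eq_mul, hk0def]
    push_cast
    rw [show (2:ZMod (2^d)) ^ a * (↑U⁻¹ * 2 ^ (d - 1 - a))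
      = ↑U⁻¹ * ((2:ZMod (2^d)) ^ a * 2 ^ (d - 1 - a)) by ring, hpowsplit, hUix]
  rw [hsmul]
  have hneg : (2 : ZMod (2 ^ d)) ^ (d - 1) + 2 ^ (d - 1) = 0 := by
    rw [← two_mul]; exact h2pow
  linear_combination -hneg

/-- Let `d ≥ 1`, `n = 2^d`, `m = 2^{d-1}`, let `c_k` be integers and
`λ_k = k + c_k n` for `k ∈ ℤ/nℤ`.  Then for every `j ≠ 0` in `ℤ/nℤ`, the quantity
`Λ₀(j) = ∑_{k : jk ≡ 0 (n)} λ_k − ∑_{k : jk ≡ m (n)} λ_k` satisfies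
`Λ₀(j) ≡ m (mod n)`; in particular `Λ₀(j) ≠ 0`. -/
theorem stmt_16 (d : ℕ) (hd : 1 ≤ d) (n m : ℕ) (hn : n = 2 ^ d)
    (hm : m = 2 ^ (d - 1)) [NeZero n]
    (c : ZMod n → ℤ) (lam : ZMod n → ℤ)
    (hlam : ∀ k : ZMod n, lam k = (k.val : ℤ) + c k * n)
    (j : ZMod n) (hj : j ≠ 0) :
    ((∑ k ∈ Finset.univ.filter (fun k : ZMod n => j * k = 0), lam k)
        - ∑ k ∈ Finset.univ.filter (fun k : ZMod n => j * k = (m : ZMod n)), lam k)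
      ≡ (m : ℤ) [ZMOD (n : ℤ)] ∧
    ((∑ k ∈ Finset.univ.filter (fun k : ZMod n => j * k = 0), lam k)
        - ∑ k ∈ Finset.univ.filter (fun k : ZMod n => j * k = (m : ZMod n)), lam k)
      ≠ 0 := by
  subst hn hm
  have h2d : (2 : ZMod (2 ^ d)) ^ d = 0 := by
    have := ZMod.natCast_self (2 ^ d)
    push_cast at this; exact this
  have hcast : ∀ k : ZMod (2 ^ d), ((lam k : ℤ) : ZMod (2 ^ d)) = k := by
    intro k
    rw [hlam k]
    push_cast
    rw [show ((k.val : ℕ) : ZMod (2^d)) = k by simp [ZMod.natCast_val]]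
    rw [h2d, mul_zero, add_zero]
  have hmcast : (((2 : ℕ) ^ (d - 1) : ℕ) : ZMod (2 ^ d)) = (2 : ZMod (2 ^ d)) ^ (d - 1) := by
    push_cast; ring
  have hmain :
      ((∑ k ∈ Finset.univ.filter (fun k : ZMod (2^d) => j * k = 0), lam k)
        - ∑ k ∈ Finset.univ.filter
            (fun k : ZMod (2^d) => j * k = ((2^(d-1) : ℕ) : ZMod (2^d))), lam k)
      ≡ ((2^(d-1) : ℕ) : ℤ) [ZMOD ((2^d : ℕ) : ℤ)] := by
    rw [← ZMod.intCast_eq_intCast_iff]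
    push_cast
    simp only [hcast]
    exact key16 d hd j hj
  refine ⟨hmain, ?_⟩
  intro h0
  rw [h0] at hmain
  have hdvd : ((2 ^ d : ℕ) : ℤ) ∣ ((2 ^ (d - 1) : ℕ) : ℤ) - 0 := hmain.dvd
  rw [sub_zero] at hdvd
  have hdvd' : (2 : ℕ) ^ d ∣ 2 ^ (d - 1) := by exact_mod_cast hdvd
  have hle : (2 : ℕ) ^ d ≤ 2 ^ (d - 1) := Nat.le_of_dvd (by positivity) hdvd'
  have hlt : (2 : ℕ) ^ (d - 1) < 2 ^ d :=
    Nat.pow_lt_pow_right (by norm_num) (by omega)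
  omega
end

section
/- Let p and q be distinct primes and n = pq. Suppose c_0,…,c_{n−1} are integers satisfying ∑_{k=0}^{n−1} c_k ζ_n^{−k} = 1/(1 − ζ_n^{−1}). Set a_0 = 0 and, for j = 1,…,n−1, a_j = 1/(ζ_n^{−j} − 1) + ∑_{k=0}^{n−1} c_k ζ_n^{−jk}. Then G = Circ(a_0,…,a_{n−1}) is a Hermitian matrix with a_1 = 0 (so G is not dense), G has universal perfect state transfer, and a_p ≠ 0 and a_q ≠ 0 (so the underlying graph of G is connected). -/
open Matrix Complex Finset

section aux
variable {n : ℕ} [NeZero n] {ζ : ℂ}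

lemma zeta_ne_zero (hprim : IsPrimitiveRoot ζ n) : ζ ≠ 0 :=
  hprim.ne_zero (NeZero.ne n)

lemma zeta_zpow_congr (hprim : IsPrimitiveRoot ζ n) {A B : ℤ}
    (h : (A : ZMod n) = (B : ZMod n)) : ζ ^ A = ζ ^ B := by
  have hd : (n : ℤ) ∣ A - B := by
    rwa [← ZMod.intCast_zmod_eq_zero_iff_dvd, Int.cast_sub, sub_eq_zero]
  obtain ⟨k, hk⟩ := hd
  have hA : A = B + n * k := by linarith
  rw [hA, zpow_add₀ (zeta_ne_zero hprim), _root_.zpow_mul, zpow_natCast, hprim.pow_eq_one,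
    _root_.one_zpow, mul_one]

lemma zeta_pow_congr (hprim : IsPrimitiveRoot ζ n) {A B : ℕ}
    (h : (A : ZMod n) = (B : ZMod n)) : ζ ^ A = ζ ^ B := by
  have := zeta_zpow_congr hprim (A := A) (B := B) (by exact_mod_cast h)
  simpa [zpow_natCast] using this

lemma sum_zmod_eq_sum_range (f : ZMod n → ℂ) :
    ∑ d : ZMod n, f d = ∑ j ∈ Finset.range n, f j := by
  refine Finset.sum_nbij' (fun d : ZMod n => d.val) (fun j : ℕ => (j : ZMod n)) ?_ ?_ ?_ ?_ ?_
  · intro d _; exact Finset.mem_range.2 (ZMod.val_lt d)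
  · intro j _; exact Finset.mem_univ _
  · intro d _; exact ZMod.natCast_zmod_val d
  · intro j hj; exact ZMod.val_natCast_of_lt (Finset.mem_range.1 hj)
  · intro d _; rw [ZMod.natCast_zmod_val]

lemma ortho (hprim : IsPrimitiveRoot ζ n) (r : ZMod n) :
    ∑ d : ZMod n, ζ ^ ((d * r).val) = if r = 0 then (n : ℂ) else 0 := by
  have step : ∀ d : ZMod n, ζ ^ ((d * r).val) = (ζ ^ r.val) ^ d.val := by
    intro d
    rw [← pow_mul]
    refine zeta_pow_congr hprim ?_
    push_cast [ZMod.natCast_val, ZMod.cast_id]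
    ring
  simp_rw [step]
  rw [sum_zmod_eq_sum_range (fun d => (ζ ^ r.val) ^ (d : ZMod n).val)]
  have : ∀ j ∈ Finset.range n, (ζ ^ r.val) ^ ((j : ZMod n)).val = (ζ ^ r.val) ^ j := by
    intro j hj
    rw [ZMod.val_natCast_of_lt (Finset.mem_range.1 hj)]
  rw [Finset.sum_congr rfl this]
  by_cases hr : r = 0
  · simp [hr]
  · rw [if_neg hr]
    have hx1 : ζ ^ r.val ≠ 1 := by
      refine hprim.pow_ne_one_of_pos_of_lt ?_ (ZMod.val_lt r)
      exact (Nat.pos_of_ne_zero (fun h => hr (by rwa [← ZMod.val_eq_zero]))).ne'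
    rw [geom_sum_eq hx1]
    have : (ζ ^ r.val) ^ n = 1 := by
      rw [← pow_mul, mul_comm, pow_mul, hprim.pow_eq_one, one_pow]
    simp [this]


lemma denom_ne (hprim : IsPrimitiveRoot ζ n) {d : ZMod n} (hd : d ≠ 0) :
    1 - ζ ^ d.val ≠ 0 := by
  intro h
  have : ζ ^ d.val = 1 := by linear_combination -h
  exact hprim.pow_ne_one_of_pos_of_lt
    (Nat.pos_of_ne_zero (fun h0 => hd (by rwa [← ZMod.val_eq_zero]))).ne' (ZMod.val_lt d) this

lemma T_zero (hprim : IsPrimitiveRoot ζ n) :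
    ∑ d ∈ Finset.univ.erase (0 : ZMod n), 1 / (1 - ζ ^ d.val) = ((n : ℂ) - 1) / 2 := by
  have hcard : (Finset.univ.erase (0 : ZMod n)).card = n - 1 := by
    rw [Finset.card_erase_of_mem (Finset.mem_univ _), Finset.card_univ, ZMod.card]
  have hre : ∑ d ∈ Finset.univ.erase (0 : ZMod n), 1 / (1 - ζ ^ d.val)
      = ∑ d ∈ Finset.univ.erase (0 : ZMod n), 1 / (1 - ζ ^ (-d).val) := by
    refine Finset.sum_nbij' (fun d : ZMod n => -d) (fun d : ZMod n => -d) ?_ ?_ ?_ ?_ ?_ <;>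
      intro d hd <;> simp_all [Finset.mem_erase, neg_eq_zero, neg_neg]
  have key : ∀ d ∈ Finset.univ.erase (0 : ZMod n),
      1 / (1 - ζ ^ d.val) + 1 / (1 - ζ ^ (-d).val) = 1 := by
    intro d hd
    have hd0 : d ≠ 0 := (Finset.mem_erase.1 hd).1
    have hnd0 : -d ≠ 0 := by simpa [neg_eq_zero] using hd0
    have h1 : 1 - ζ ^ d.val ≠ 0 := denom_ne hprim hd0
    have h2 : 1 - ζ ^ (-d).val ≠ 0 := denom_ne hprim hnd0
    have hmul : ζ ^ d.val * ζ ^ (-d).val = 1 := by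
      rw [← pow_add]
      have : ((d.val + (-d).val : ℕ) : ZMod n) = ((0 : ℕ) : ZMod n) := by
        push_cast [ZMod.natCast_val, ZMod.cast_id]
        ring
      rw [zeta_pow_congr hprim this, pow_zero]
    rw [div_add_div _ _ h1 h2, div_eq_one_iff_eq (mul_ne_zero h1 h2)]
    linear_combination -hmul
  have h2S : (2 : ℂ) * ∑ d ∈ Finset.univ.erase (0 : ZMod n), 1 / (1 - ζ ^ d.val)
      = (n : ℂ) - 1 := by
    have hsum := Finset.sum_congr rfl key
    rw [Finset.sum_add_distrib, ← hre] at hsum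
    rw [Finset.sum_const, hcard] at hsum
    have hn1 : 1 ≤ n := Nat.one_le_iff_ne_zero.2 (NeZero.ne n)
    rw [nsmul_eq_mul, mul_one, Nat.cast_sub hn1, Nat.cast_one] at hsum
    linear_combination hsum
  linear_combination h2S / 2

lemma sum_zeta_pow (hprim : IsPrimitiveRoot ζ n) (r : ℕ) :
    ∑ d : ZMod n, ζ ^ (d.val * r) = if (n : ℕ) ∣ r then (n : ℂ) else 0 := by
  have h : ∀ d : ZMod n, ζ ^ (d.val * r) = ζ ^ ((d * (r : ZMod n)).val) := by
    intro d
    refine zeta_pow_congr hprim ?_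
    push_cast [ZMod.natCast_val, ZMod.cast_id]
    ring
  simp_rw [h]
  rw [ortho hprim]
  congr 1
  simp [ZMod.natCast_eq_zero_iff]

lemma T_step (hprim : IsPrimitiveRoot ζ n) (r : ℕ) :
    ∑ d ∈ Finset.univ.erase (0 : ZMod n), ζ ^ (d.val * (r + 1)) / (1 - ζ ^ d.val)
      = (∑ d ∈ Finset.univ.erase (0 : ZMod n), ζ ^ (d.val * r) / (1 - ζ ^ d.val))
        + 1 - (if (n : ℕ) ∣ r then (n : ℂ) else 0) := by
  have key : ∀ d ∈ Finset.univ.erase (0 : ZMod n),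
      ζ ^ (d.val * r) / (1 - ζ ^ d.val) - ζ ^ (d.val * (r + 1)) / (1 - ζ ^ d.val)
        = ζ ^ (d.val * r) := by
    intro d hd
    have h1 : 1 - ζ ^ d.val ≠ 0 := denom_ne hprim (Finset.mem_erase.1 hd).1
    rw [Nat.mul_succ, pow_add, div_sub_div_same, div_eq_iff h1]
    ring
  have hsub : ∑ d ∈ Finset.univ.erase (0 : ZMod n),
      (ζ ^ (d.val * r) / (1 - ζ ^ d.val) - ζ ^ (d.val * (r + 1)) / (1 - ζ ^ d.val))
        = (if (n : ℕ) ∣ r then (n : ℂ) else 0) - 1 := by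
    rw [Finset.sum_congr rfl key, Finset.sum_erase_eq_sub (Finset.mem_univ 0),
      sum_zeta_pow hprim r]
    simp
  rw [Finset.sum_sub_distrib] at hsub
  linear_combination -hsub

lemma T_val (hprim : IsPrimitiveRoot ζ n) :
    ∀ r : ℕ, 1 ≤ r → r ≤ n →
      ∑ d ∈ Finset.univ.erase (0 : ZMod n), ζ ^ (d.val * r) / (1 - ζ ^ d.val)
        = ((n : ℂ) - 1) / 2 + r - n := by
  intro r h1 h2
  induction r, h1 using Nat.le_induction with
  | base =>
    have h0 := T_step hprim 0
    rw [if_pos (dvd_zero n)] at h0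
    have hT0 : ∑ d ∈ Finset.univ.erase (0 : ZMod n), ζ ^ (d.val * 0) / (1 - ζ ^ d.val)
        = ((n : ℂ) - 1) / 2 := by
      simpa using T_zero hprim
    rw [hT0] at h0
    rw [h0]
    push_cast
    ring
  | succ r hr ih =>
    have hrn : r ≤ n := by omega
    have hndvd : ¬ (n : ℕ) ∣ r := by
      intro hdvd
      have := Nat.le_of_dvd (by omega) hdvd
      omega
    have h0 := T_step hprim r
    rw [if_neg hndvd, ih hrn] at h0
    rw [h0]
    push_cast
    ring

lemma eigen (hprim : IsPrimitiveRoot ζ n) (c : ℕ → ℤ) (a : ZMod n → ℂ)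
    (ha0 : a 0 = 0)
    (ha : ∀ j : ZMod n, j ≠ 0 →
      a j = 1 / (ζ ^ (-(j.val : ℤ)) - 1)
        + ∑ k ∈ Finset.range n, (c k : ℂ) * ζ ^ (-(j.val * k : ℤ)))
    (m : ZMod n) :
    ∑ d : ZMod n, a d * ζ ^ ((d * m).val)
      = ((m.val : ℂ) - ((n : ℂ) - 1) / 2) + n * c m.val
        - ∑ k ∈ Finset.range n, (c k : ℂ) := by
  have hζ0 : ζ ≠ 0 := zeta_ne_zero hprim
  have hsplit : ∑ d : ZMod n, a d * ζ ^ ((d * m).val)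
      = ∑ d ∈ Finset.univ.erase (0 : ZMod n), a d * ζ ^ ((d * m).val) := by
    rw [Finset.sum_erase_eq_sub (Finset.mem_univ 0), ha0]
    ring
  have key : ∀ d ∈ Finset.univ.erase (0 : ZMod n),
      a d * ζ ^ ((d * m).val)
        = ζ ^ (d.val * (m.val + 1)) / (1 - ζ ^ d.val)
          + ∑ k ∈ Finset.range n, (c k : ℂ) * ζ ^ ((d * (m - (k : ZMod n))).val) := by
    intro d hd
    have hd0 : d ≠ 0 := (Finset.mem_erase.1 hd).1
    have hx1 : 1 - ζ ^ d.val ≠ 0 := denom_ne hprim hd0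
    have hxne : ζ ^ d.val ≠ 0 := pow_ne_zero _ hζ0
    rw [ha d hd0, add_mul]
    congr 1
    · have hinv : ζ ^ (-(d.val : ℤ)) = (ζ ^ d.val)⁻¹ := by
        rw [_root_.zpow_neg, zpow_natCast]
      rw [hinv]
      have hden : (ζ ^ d.val)⁻¹ - 1 = (1 - ζ ^ d.val) / ζ ^ d.val := by
        field_simp
      rw [hden, one_div_div]
      rw [div_mul_eq_mul_div, ← pow_add,
        zeta_pow_congr hprim (A := d.val + (d * m).val) (B := d.val * (m.val + 1))
          (by push_cast [ZMod.natCast_val, ZMod.cast_id]; ring)]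
    · rw [Finset.sum_mul]
      refine Finset.sum_congr rfl ?_
      intro k _
      rw [mul_assoc]
      congr 1
      have h1 : ζ ^ (-(d.val * k : ℤ)) * ζ ^ ((d * m).val)
          = ζ ^ ((-(d.val * k : ℤ)) + ((d * m).val : ℤ)) := by
        rw [zpow_add₀ hζ0, zpow_natCast]
      rw [h1, show (ζ ^ ((d * (m - (k : ZMod n))).val) : ℂ)
          = ζ ^ (((d * (m - (k : ZMod n))).val : ℤ)) from (zpow_natCast ζ _).symm]
      refine zeta_zpow_congr hprim ?_
      push_cast [ZMod.natCast_val, ZMod.cast_id]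
      ring
  rw [hsplit, Finset.sum_congr rfl key, Finset.sum_add_distrib]
  have hA : ∑ d ∈ Finset.univ.erase (0 : ZMod n),
      ζ ^ (d.val * (m.val + 1)) / (1 - ζ ^ d.val)
        = ((n : ℂ) - 1) / 2 + (m.val + 1 : ℕ) - n := by
    exact T_val hprim (m.val + 1) (by omega) (by have := ZMod.val_lt m; omega)
  have hB : ∑ d ∈ Finset.univ.erase (0 : ZMod n),
      ∑ k ∈ Finset.range n, (c k : ℂ) * ζ ^ ((d * (m - (k : ZMod n))).val)
        = (n : ℂ) * c m.val - ∑ k ∈ Finset.range n, (c k : ℂ) := by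
    rw [Finset.sum_erase_eq_sub (Finset.mem_univ 0)]
    have hzero : ∑ k ∈ Finset.range n, (c k : ℂ) * ζ ^ (((0 : ZMod n) * (m - (k : ZMod n))).val)
        = ∑ k ∈ Finset.range n, (c k : ℂ) := by
      refine Finset.sum_congr rfl ?_
      intro k _
      simp
    rw [hzero, Finset.sum_comm]
    have hswap : ∑ k ∈ Finset.range n, ∑ d : ZMod n, (c k : ℂ) * ζ ^ ((d * (m - (k : ZMod n))).val)
        = ∑ k ∈ Finset.range n, (c k : ℂ) * (if m - (k : ZMod n) = 0 then (n : ℂ) else 0) := by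
      refine Finset.sum_congr rfl ?_
      intro k _
      rw [← Finset.mul_sum, ortho hprim]
    rw [hswap]
    congr 1
    rw [Finset.sum_eq_single m.val]
    · rw [ZMod.natCast_zmod_val, sub_self, if_pos rfl]
      ring
    · intro k hk hkne
      have : m - (k : ZMod n) ≠ 0 := by
        intro h
        apply hkne
        have : (k : ZMod n) = m := by linear_combination -h
        rw [← this, ZMod.val_natCast_of_lt (Finset.mem_range.1 hk)]
      rw [if_neg this, mul_zero]
    · intro hm
      exact absurd (Finset.mem_range.2 (ZMod.val_lt m)) hm
  rw [hA, hB]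
  push_cast
  ring

lemma walk_entry (hprim : IsPrimitiveRoot ζ n) (c : ℕ → ℤ) (a : ZMod n → ℂ)
    (ha0 : a 0 = 0)
    (ha : ∀ j : ZMod n, j ≠ 0 →
      a j = 1 / (ζ ^ (-(j.val : ℤ)) - 1)
        + ∑ k ∈ Finset.range n, (c k : ℂ) * ζ ^ (-(j.val * k : ℤ)))
    (t : ℝ) (v u : ZMod n) :
    qwalk (Circ a) t v u
      = (n : ℂ)⁻¹ * ∑ m : ZMod n,
          Complex.exp (-(Complex.I * t) * (((m.val : ℂ) - ((n : ℂ) - 1) / 2)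
            + n * c m.val - ∑ k ∈ Finset.range n, (c k : ℂ)))
          * ζ ^ ((m * (v - u)).val) := by
  classical
  have hζ0 : ζ ≠ 0 := zeta_ne_zero hprim
  have hnne : (n : ℂ) ≠ 0 := Nat.cast_ne_zero.2 (NeZero.ne n)
  set lamf : ZMod n → ℂ := fun m => ((m.val : ℂ) - ((n : ℂ) - 1) / 2)
      + n * c m.val - ∑ k ∈ Finset.range n, (c k : ℂ) with hlam
  set F : Matrix (ZMod n) (ZMod n) ℂ := Matrix.of (fun j k => ζ ^ ((j * k).val)) with hF
  set Fi : Matrix (ZMod n) (ZMod n) ℂ :=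
      Matrix.of (fun j k => (n : ℂ)⁻¹ * ζ ^ ((-(j * k)).val)) with hFi
  have hcomb : ∀ (x y : ZMod n), ζ ^ ((x).val) * ζ ^ ((y).val) = ζ ^ ((x + y).val) := by
    intro x y
    rw [← pow_add]
    refine zeta_pow_congr hprim ?_
    push_cast [ZMod.natCast_val, ZMod.cast_id]
    ring
  have hFFi : F * Fi = 1 := by
    ext j l
    rw [Matrix.mul_apply]
    have : ∀ m : ZMod n, F j m * Fi m l = (n : ℂ)⁻¹ * ζ ^ ((m * (j - l)).val) := by
      intro m
      rw [hF, hFi]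
      simp only [Matrix.of_apply]
      have e1 : ζ ^ ((j * m).val) * ζ ^ ((-(m * l)).val) = ζ ^ ((m * (j - l)).val) := by
        rw [hcomb (j * m) (-(m * l))]
        congr 1
        ring
      linear_combination ((n : ℂ))⁻¹ * e1
    rw [Finset.sum_congr rfl (fun m _ => this m), ← Finset.mul_sum, ortho hprim]
    by_cases hjl : j = l
    · simp [hjl, Matrix.one_apply, inv_mul_cancel₀ hnne]
    · have : j - l ≠ 0 := sub_ne_zero.2 hjl
      simp [this, Matrix.one_apply, hjl]
  have hFiF : Fi * F = 1 := by
    ext j l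
    rw [Matrix.mul_apply]
    have : ∀ m : ZMod n, Fi j m * F m l = (n : ℂ)⁻¹ * ζ ^ ((m * (l - j)).val) := by
      intro m
      rw [hF, hFi]
      simp only [Matrix.of_apply]
      have e1 : ζ ^ ((-(j * m)).val) * ζ ^ ((m * l).val) = ζ ^ ((m * (l - j)).val) := by
        rw [hcomb (-(j * m)) (m * l)]
        congr 1
        ring
      linear_combination ((n : ℂ))⁻¹ * e1
    rw [Finset.sum_congr rfl (fun m _ => this m), ← Finset.mul_sum, ortho hprim]
    by_cases hjl : l = j
    · simp [hjl, Matrix.one_apply, inv_mul_cancel₀ hnne]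
    · have hne : l - j ≠ 0 := sub_ne_zero.2 hjl
      simp [hne, Matrix.one_apply, (Ne.symm hjl : j ≠ l)]
  have hunit : IsUnit F := ⟨⟨F, Fi, hFFi, hFiF⟩, rfl⟩
  have hFinv : F⁻¹ = Fi := Matrix.inv_eq_right_inv hFFi
  have hCF : Circ a * F = F * Matrix.diagonal lamf := by
    ext j m
    rw [Matrix.mul_apply, Matrix.mul_diagonal]
    have hre : ∑ k : ZMod n, Circ a j k * F k m
        = ∑ d : ZMod n, a d * ζ ^ (((j + d) * m).val) := by
      refine (Fintype.sum_equiv (Equiv.addLeft j) _ _ ?_).symm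
      intro d
      simp [Circ, hF]
    rw [hre]
    have hterm : ∀ d : ZMod n, a d * ζ ^ (((j + d) * m).val)
        = ζ ^ ((j * m).val) * (a d * ζ ^ ((d * m).val)) := by
      intro d
      have e1 : ζ ^ ((j * m).val) * ζ ^ ((d * m).val) = ζ ^ (((j + d) * m).val) := by
        rw [hcomb (j * m) (d * m)]
        congr 1
        ring
      linear_combination (-(a d)) * e1
    rw [Finset.sum_congr rfl (fun d _ => hterm d), ← Finset.mul_sum,
      eigen hprim c a ha0 ha m]
    rw [hF]
    rfl
  have hdiag : Circ a = F * Matrix.diagonal lamf * F⁻¹ := by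
    rw [hFinv]
    calc Circ a = Circ a * (F * Fi) := by rw [hFFi, mul_one]
    _ = (Circ a * F) * Fi := by rw [mul_assoc]
    _ = F * Matrix.diagonal lamf * Fi := by rw [hCF]
  have hfun : (fun m : ZMod n => (-(Complex.I * (t : ℂ))) * lamf m)
      = (-(Complex.I * (t : ℂ))) • lamf := by
    funext m
    simp [smul_eq_mul]
  have hsmul : (-(Complex.I * (t : ℂ))) • Circ a
      = F * Matrix.diagonal (fun m => (-(Complex.I * (t : ℂ))) * lamf m) * F⁻¹ := by
    rw [hdiag, hfun, Matrix.diagonal_smul, Matrix.mul_smul, Matrix.smul_mul]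
  have hexp : qwalk (Circ a) t
      = F * Matrix.diagonal (fun m => Complex.exp ((-(Complex.I * (t : ℂ))) * lamf m)) * F⁻¹ := by
    rw [qwalk, hsmul, Matrix.exp_conj F _ hunit, Matrix.exp_diagonal]
    congr 2
    funext m
    rw [Pi.exp_def, Complex.exp_eq_exp_ℂ]
  rw [hexp, hFinv]
  rw [Matrix.mul_apply]
  have hterm2 : ∀ m : ZMod n,
      (F * Matrix.diagonal (fun m => Complex.exp ((-(Complex.I * (t : ℂ))) * lamf m))) v m
        * Fi m u
      = (n : ℂ)⁻¹ * (Complex.exp ((-(Complex.I * (t : ℂ))) * lamf m)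
          * ζ ^ ((m * (v - u)).val)) := by
    intro m
    rw [Matrix.mul_diagonal]
    rw [hF, hFi]
    simp only [Matrix.of_apply]
    have : ζ ^ ((v * m).val) * ζ ^ ((-(m * u)).val) = ζ ^ ((m * (v - u)).val) := by
      rw [hcomb (v * m) (-(m * u))]
      congr 1
      ring
    rw [show ζ ^ ((v * m).val) * Complex.exp (-(Complex.I * (t:ℂ)) * lamf m)
        * ((n : ℂ)⁻¹ * ζ ^ ((-(m * u)).val))
      = (n : ℂ)⁻¹ * (Complex.exp (-(Complex.I * (t:ℂ)) * lamf m)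
          * (ζ ^ ((v * m).val) * ζ ^ ((-(m * u)).val))) from by ring, this]
  rw [Finset.sum_congr rfl (fun m _ => hterm2 m), ← Finset.mul_sum]

lemma conj_zeta_zpow (hprim : IsPrimitiveRoot ζ n)
    (hζe : ζ = Complex.exp (2 * Real.pi * Complex.I / n)) (A : ℤ) :
    (starRingEnd ℂ) (ζ ^ A) = ζ ^ (-A) := by
  have hconjζ : (starRingEnd ℂ) ζ = ζ⁻¹ := by
    rw [hζe, ← Complex.exp_conj, ← Complex.exp_neg]
    congr 1
    simp [map_div₀, Complex.conj_I, map_ofNat]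
    ring
  rw [map_zpow₀, hconjζ, _root_.inv_zpow]
  exact (_root_.zpow_neg ζ A).symm

lemma herm (hprim : IsPrimitiveRoot ζ n)
    (hζe : ζ = Complex.exp (2 * Real.pi * Complex.I / n))
    (c : ℕ → ℤ) (a : ZMod n → ℂ) (ha0 : a 0 = 0)
    (ha : ∀ j : ZMod n, j ≠ 0 →
      a j = 1 / (ζ ^ (-(j.val : ℤ)) - 1)
        + ∑ k ∈ Finset.range n, (c k : ℂ) * ζ ^ (-(j.val * k : ℤ))) :
    (Circ a).IsHermitian := by
  have key : ∀ d : ZMod n, (starRingEnd ℂ) (a d) = a (-d) := by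
    intro d
    by_cases hd0 : d = 0
    · simp [hd0, ha0]
    · have hnd0 : -d ≠ 0 := by simpa [neg_eq_zero] using hd0
      rw [ha d hd0, ha (-d) hnd0]
      rw [map_add, map_div₀, map_sub, _root_.map_one, conj_zeta_zpow hprim hζe]
      have hnv : (-d).val = n - d.val := by
        rw [ZMod.neg_val, if_neg hd0]
      have hdvle : d.val ≤ n := le_of_lt (ZMod.val_lt d)
      congr 1
      · congr 2
        refine (zeta_zpow_congr hprim ?_).symm
        rw [hnv]
        push_cast [Nat.cast_sub hdvle]
        simp [ZMod.natCast_self, ZMod.natCast_val, ZMod.cast_id]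
      · rw [map_sum]
        refine Finset.sum_congr rfl ?_
        intro k _
        rw [_root_.map_mul, conj_zeta_zpow hprim hζe, map_intCast]
        congr 1
        refine (zeta_zpow_congr hprim ?_).symm
        rw [hnv]
        push_cast [Nat.cast_sub hdvle]
        simp [ZMod.natCast_self, ZMod.natCast_val, ZMod.cast_id]
  show (Circ a)ᴴ = Circ a
  ext j k
  rw [Matrix.conjTranspose_apply]
  show (starRingEnd ℂ) (Circ a k j) = Circ a j k
  rw [show Circ a k j = a (j - k) from rfl, show Circ a j k = a (k - j) from rfl,
    key (j - k)]
  congr 1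
  ring

lemma a_ne_zero (hprim : IsPrimitiveRoot ζ n) {p q : ℕ} (hq : q.Prime) (hn : n = p * q)
    (hp1 : 0 < p)
    (c : ℕ → ℤ) (a : ZMod n → ℂ)
    (ha : ∀ j : ZMod n, j ≠ 0 →
      a j = 1 / (ζ ^ (-(j.val : ℤ)) - 1)
        + ∑ k ∈ Finset.range n, (c k : ℂ) * ζ ^ (-(j.val * k : ℤ))) :
    a (p : ZMod n) ≠ 0 := by
  have hnpos : 0 < n := Nat.pos_of_ne_zero (NeZero.ne n)
  have hpltn : p < n := by
    rw [hn]
    have := hq.two_le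
    nlinarith
  have hv : ((p : ZMod n)).val = p := ZMod.val_natCast_of_lt hpltn
  have hpne : (p : ZMod n) ≠ 0 := by
    intro h
    rw [← ZMod.val_eq_zero, hv] at h
    omega
  set ω : ℂ := ζ ^ (-(p : ℤ)) with hω
  have hωprim : IsPrimitiveRoot ω q := by
    have h1 : IsPrimitiveRoot (ζ ^ p) q := hprim.pow hnpos hn
    have : ω = (ζ ^ p)⁻¹ := by
      rw [hω, _root_.zpow_neg, zpow_natCast]
    rw [this]
    exact h1.inv
  have hωne1 : ω ≠ 1 := by
    intro h
    have := hωprim.pow_ne_one_of_pos_of_lt (l := 1) one_ne_zero hq.one_lt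
    simp [h] at this
  intro h0
  rw [ha _ hpne] at h0
  have hterm : ∀ k : ℕ, ζ ^ (-(((p : ZMod n)).val * k : ℤ)) = ω ^ k := by
    intro k
    rw [hω, ← zpow_natCast (ζ ^ (-(p : ℤ))) k, ← _root_.zpow_mul, hv]
    congr 1
    push_cast
    ring
  rw [show (1 : ℂ) / (ζ ^ (-(((p : ZMod n)).val : ℤ)) - 1) = 1 / (ω - 1) from by
      rw [hω, hv]] at h0
  simp_rw [hterm] at h0
  set β : ℂ := ∑ k ∈ Finset.range n, (c k : ℂ) * ω ^ k with hβdef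
  have hsub : ω - 1 ≠ 0 := sub_ne_zero.2 hωne1
  have hβ : (1 - ω) * β = 1 := by
    field_simp at h0
    linear_combination -h0
  -- polynomial argument
  set P : Polynomial ℤ := (1 - Polynomial.X)
      * (∑ k ∈ Finset.range n, Polynomial.C (c k) * Polynomial.X ^ k) - 1 with hP
  have hroot : Polynomial.aeval ω P = 0 := by
    rw [hP]
    simp only [map_sub, _root_.map_mul, _root_.map_one, map_sum, Polynomial.aeval_X,
      Polynomial.aeval_C, map_pow, algebraMap_int_eq, Int.coe_castRingHom, eq_intCast, map_intCast]
    push_cast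
    linear_combination hβ
  have hint : IsIntegral ℤ ω := hωprim.isIntegral hq.pos
  have hdvd : minpoly ℤ ω ∣ P := minpoly.isIntegrallyClosed_dvd hint hroot
  rw [← Polynomial.cyclotomic_eq_minpoly hωprim hq.pos] at hdvd
  obtain ⟨h, hh⟩ := hdvd
  have heval := congrArg (Polynomial.eval (1 : ℤ)) hh
  haveI : Fact q.Prime := ⟨hq⟩
  rw [Polynomial.eval_mul, Polynomial.eval_one_cyclotomic_prime] at heval
  have hevalP : Polynomial.eval (1 : ℤ) P = -1 := by
    rw [hP]
    simp
  rw [hevalP] at heval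
  have hdvd1 : (q : ℤ) ∣ 1 := by
    refine dvd_neg.mp ?_
    exact ⟨Polynomial.eval 1 h, heval⟩
  have := Int.le_of_dvd one_pos hdvd1
  have h2 := hq.two_le
  omega

end aux

/-- Let `p ≠ q` be primes, `n = pq`, and let `c_0,…,c_{n-1}` be integers with
`∑_k c_k ζ_n^{-k} = 1/(1 - ζ_n^{-1})`.  Set `a_0 = 0` and
`a_j = 1/(ζ_n^{-j} - 1) + ∑_k c_k ζ_n^{-jk}` for `j ≠ 0`.  Then
`G = Circ(a₀,…,a_{n-1})` is Hermitian, `a_1 = 0` (so `G` is not dense), `G` has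
universal perfect state transfer, and `a_p ≠ 0` and `a_q ≠ 0` (so the underlying
graph of `G` is connected). -/
theorem stmt_17 {p q n : ℕ} [NeZero n] (hp : p.Prime) (hq : q.Prime)
    (hpq : p ≠ q) (hn : n = p * q)
    (ζ : ℂ) (hζ : ζ = Complex.exp (2 * Real.pi * Complex.I / n))
    (c : ℕ → ℤ)
    (hc : (∑ k ∈ Finset.range n, (c k : ℂ) * ζ ^ (-(k : ℤ))) = 1 / (1 - ζ ^ (-1 : ℤ)))
    (a : ZMod n → ℂ) (ha0 : a 0 = 0)
    (ha : ∀ j : ZMod n, j ≠ 0 →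
      a j = 1 / (ζ ^ (-(j.val : ℤ)) - 1)
        + ∑ k ∈ Finset.range n, (c k : ℂ) * ζ ^ (-(j.val * k : ℤ))) :
    (Circ a).IsHermitian ∧
    a 1 = 0 ∧
    upst (Circ a) ∧
    a (p : ZMod n) ≠ 0 ∧
    a (q : ZMod n) ≠ 0 := by
  have hprim : IsPrimitiveRoot ζ n := by
    rw [hζ]; exact Complex.isPrimitiveRoot_exp n (NeZero.ne n)
  have hζ0 : ζ ≠ 0 := zeta_ne_zero hprim
  have hnne : (n : ℂ) ≠ 0 := Nat.cast_ne_zero.2 (NeZero.ne n)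
  have hp2 := hp.two_le
  have hq2 := hq.two_le
  have h1n : 1 < n := by rw [hn]; nlinarith
  haveI : Fact (1 < n) := ⟨h1n⟩
  -- a 1 = 0
  have hζne1 : ζ ≠ 1 := hprim.ne_one h1n
  have ha1 : a 1 = 0 := by
    have hone_ne : (1 : ZMod n) ≠ 0 := by
      intro h
      rw [← ZMod.val_eq_zero, ZMod.val_one] at h
      omega
    rw [ha 1 hone_ne, ZMod.val_one]
    have hsum : ∑ k ∈ Finset.range n, (c k : ℂ) * ζ ^ (-((1 : ℕ) * k : ℤ))
        = ∑ k ∈ Finset.range n, (c k : ℂ) * ζ ^ (-(k : ℤ)) := by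
      refine Finset.sum_congr rfl ?_
      intro k _
      norm_num
    rw [hsum, hc]
    have hxne1 : ζ ^ ((-1 : ℤ)) ≠ 1 := by
      rw [_root_.zpow_neg_one]
      simpa [inv_eq_one] using hζne1
    have hx1 : ζ ^ ((-1 : ℤ)) - 1 ≠ 0 := sub_ne_zero.2 hxne1
    have hx2 : (1 : ℂ) - ζ ^ ((-1 : ℤ)) ≠ 0 := sub_ne_zero.2 (fun h => hxne1 h.symm)
    have hexp : (-((1 : ℕ) : ℤ)) = (-1 : ℤ) := by norm_num
    rw [hexp]
    rw [show ζ ^ ((-1 : ℤ)) - 1 = -(1 - ζ ^ ((-1 : ℤ))) from by ring, div_neg]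
    ring
  refine ⟨herm hprim hζ c a ha0 ha, ha1, ?_, a_ne_zero hprim hq hn hp.pos c a ha,
    a_ne_zero hprim hp (by rw [hn, mul_comm]) hq.pos c a ha⟩
  -- UPST
  intro u v
  set s : ℕ := (v - u).val + n with hsdef
  have hspos : 0 < s := by
    have : 0 < n := Nat.pos_of_ne_zero (NeZero.ne n)
    omega
  refine ⟨2 * Real.pi * s / n, ?_, ?_⟩
  · apply div_pos
    · apply mul_pos
      · exact mul_pos two_pos Real.pi_pos
      · exact_mod_cast Nat.cast_pos.2 hspos
    · exact_mod_cast Nat.cast_pos.2 (Nat.pos_of_ne_zero (NeZero.ne n))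
  · show ‖qwalk (Circ a) (2 * Real.pi * s / n) v u‖ = 1
    rw [walk_entry hprim c a ha0 ha]
    have hs : ((s : ℕ) : ZMod n) = v - u := by
      rw [hsdef, Nat.cast_add, ZMod.natCast_val, ZMod.cast_id, ZMod.natCast_self, add_zero]
    have hts : ((2 * Real.pi * s / n : ℝ) : ℂ) = 2 * (Real.pi : ℂ) * s / n := by
      push_cast
      ring
    set Lr : ℝ := -(((n : ℝ) - 1) / 2) - ∑ k ∈ Finset.range n, (c k : ℝ) with hLrdef
    have hLc : ((Lr : ℝ) : ℂ) = -(((n : ℂ) - 1) / 2) - ∑ k ∈ Finset.range n, (c k : ℂ) := by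
      rw [hLrdef]
      push_cast
      ring
    set E : ℂ := Complex.exp (-(Complex.I * ((2 * Real.pi * s / n : ℝ) : ℂ)) * (Lr : ℂ)) with hE
    have hterm : ∀ m : ZMod n,
        Complex.exp (-(Complex.I * ((2 * Real.pi * s / n : ℝ) : ℂ))
            * (((m.val : ℂ) - ((n : ℂ) - 1) / 2)
              + n * c m.val - ∑ k ∈ Finset.range n, (c k : ℂ)))
          * ζ ^ ((m * (v - u)).val) = E := by
      intro m
      have hlam_split : -(Complex.I * ((2 * Real.pi * s / n : ℝ) : ℂ))
            * (((m.val : ℂ) - ((n : ℂ) - 1) / 2)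
              + n * c m.val - ∑ k ∈ Finset.range n, (c k : ℂ))
          = -(Complex.I * ((2 * Real.pi * s / n : ℝ) : ℂ)) * (m.val : ℂ)
            + -(Complex.I * ((2 * Real.pi * s / n : ℝ) : ℂ)) * ((n : ℂ) * (c m.val : ℂ))
            + -(Complex.I * ((2 * Real.pi * s / n : ℝ) : ℂ)) * ((Lr : ℝ) : ℂ) := by
        rw [hLc]
        ring
      rw [hlam_split, Complex.exp_add, Complex.exp_add]
      have e1 : Complex.exp (-(Complex.I * ((2 * Real.pi * s / n : ℝ) : ℂ)) * (m.val : ℂ))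
          = ζ ^ (-((s * m.val : ℕ) : ℤ)) := by
        rw [hζ, ← Complex.exp_int_mul]
        congr 1
        rw [hts]
        push_cast
        ring
      have e2 : Complex.exp (-(Complex.I * ((2 * Real.pi * s / n : ℝ) : ℂ))
          * ((n : ℂ) * (c m.val : ℂ))) = 1 := by
        rw [show -(Complex.I * ((2 * Real.pi * s / n : ℝ) : ℂ)) * ((n : ℂ) * (c m.val : ℂ))
            = ((-(s * c m.val) : ℤ) : ℂ) * (2 * (Real.pi : ℂ) * Complex.I) from by
          rw [hts]
          push_cast
          field_simp]
        exact_mod_cast Complex.exp_int_mul_two_pi_mul_I _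
      rw [e1, e2]
      have e3 : ζ ^ (-((s * m.val : ℕ) : ℤ)) * ζ ^ (((m * (v - u)).val : ℕ)) = 1 := by
        rw [← zpow_natCast ζ ((m * (v - u)).val), ← zpow_add₀ hζ0]
        rw [show ζ ^ ((-((s * m.val : ℕ) : ℤ)) + (((m * (v - u)).val : ℕ) : ℤ)) = ζ ^ (0 : ℤ)
            from zeta_zpow_congr hprim ?_]
        · exact zpow_zero ζ
        · push_cast [ZMod.natCast_val, ZMod.cast_id, ZMod.natCast_self]
          rw [Nat.cast_add, ZMod.natCast_val, ZMod.cast_id, ZMod.natCast_self]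
          ring
      rw [hE]
      linear_combination Complex.exp (-(Complex.I * ((2 * Real.pi * s / n : ℝ) : ℂ))
        * ((Lr : ℝ) : ℂ)) * e3
    rw [Finset.sum_congr rfl (fun m _ => hterm m), Finset.sum_const, Finset.card_univ,
      ZMod.card, nsmul_eq_mul]
    rw [show (n : ℂ)⁻¹ * ((n : ℂ) * E) = E from by field_simp]
    rw [hE, Complex.norm_exp]
    have hre : (-(Complex.I * ((2 * Real.pi * s / n : ℝ) : ℂ)) * ((Lr : ℝ) : ℂ)).re = 0 := by
      simp [Complex.mul_re]
    rw [hre, Real.exp_zero]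
end
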